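/- arXiv:2310.09227 — 3 statements merged into one kernel-verified Lean document; each statement's English description precedes it below -/
import Mathlib

section
/- Let 0 ≤ ℓ ≤ k_r ≤ k_c ≤ n be integers. Let A be a k_r-element subset of {1,…,n} and β a standard subset of {1,…,n} of size b ≤ k_c, and set a = |A ∩ β|. Then the number of k_c-element subsets T of {1,…,n} satisfying |A ∩ T| = ℓ and β ⊆ T equals C(k_r − a, ℓ − a) · C(n − b − k_r + a, k_c − b − ℓ + a). (This number is the (A,β) entry of the product A_{n,k_r,k_c,ℓ} · P_{k_c}.) -/
open scoped Classical

/-- Integer binomial coefficient with the convention `C x y = 0` unless `0 ≤ y ≤ x`. -/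
noncomputable def C (x y : ℤ) : ℤ :=
  if 0 ≤ y ∧ y ≤ x then (x.toNat).choose y.toNat else 0

/-- A finset `β = {b₁ < b₂ < … < b_m}` of naturals is *standard* if `bᵢ ≥ 2i` for all `i`. -/
def IsStandard (β : Finset ℕ) : Prop :=
  ∀ i < β.card, 2 * (i + 1) ≤ (β.sort (· ≤ ·)).getD i 0

/-!
Deleting `β` from `T` identifies the sets `T ⊇ β` with the subsets `T'` of `{1,…,n} \ β`, and
`|T| = b + |T'|`, `|A ∩ T| = a + |(A \ β) ∩ T'|`. What is left is the classical count of `T'`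
with `|T'| = k` and `|(A \ β) ∩ T'| = l`: choose `l` points of `A \ β` (of size `k_r - a`) and
`k - l` points of its complement (of size `n - b - k_r + a`). With the convention of `C` this
product is the right count for all integers `k`, `l`, so no case distinction is needed.
-/

open Finset

lemma C_eq_choose {x y : ℤ} (hx : 0 ≤ x) (hy : 0 ≤ y) : C x y = (x.toNat).choose y.toNat := by
  unfold C
  split_ifs with h
  · rfl
  · rw [Nat.choose_eq_zero_of_lt (by omega), Nat.cast_zero]

lemma C_of_neg (x : ℤ) {y : ℤ} (hy : y < 0) : C x y = 0 := by
  unfold C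
  rw [if_neg (by omega)]

section

variable {α : Type*} [DecidableEq α]

lemma card_powerset_filter_card_inter_eq_choose_mul_choose {U A : Finset α} (hA : A ⊆ U)
    (l m : ℕ) :
    #{T ∈ U.powerset | #T = l + m ∧ #(A ∩ T) = l} = (#A).choose l * (#(U \ A)).choose m := by
  rw [← card_powersetCard, ← card_powersetCard, ← card_product]
  refine card_nbij' (fun T ↦ (A ∩ T, T \ A)) (fun p ↦ p.1 ∪ p.2) ?_ ?_ ?_ ?_
  · intro T hT
    simp only [mem_coe, mem_filter, mem_powerset, mem_product, mem_powersetCard] at hT ⊢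
    have := card_inter_add_card_sdiff T A
    refine ⟨⟨inter_subset_left, hT.2.2⟩, sdiff_subset_sdiff hT.1 subset_rfl, ?_⟩
    rw [inter_comm] at this
    omega
  · rintro ⟨S, R⟩ h
    simp only [mem_coe, mem_filter, mem_powerset, mem_product, mem_powersetCard] at h ⊢
    have hSR : Disjoint S R :=
      disjoint_of_subset_left h.1.1 (disjoint_of_subset_right h.2.1 disjoint_sdiff)
    have hAR : A ∩ (S ∪ R) = S := by grind
    refine ⟨union_subset (h.1.1.trans hA) (h.2.1.trans sdiff_subset), ?_, ?_⟩
    · rw [card_union_of_disjoint hSR, h.1.2, h.2.2]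
    · rw [hAR, h.1.2]
  · intro T _
    grind
  · rintro ⟨S, R⟩ h
    simp only [mem_coe, mem_product, mem_powersetCard] at h
    exact Prod.ext (by grind) (by grind)

lemma card_powerset_filter_card_inter_eq_C_mul_C {U A : Finset α} (hA : A ⊆ U) (k l : ℤ) :
    (#{T ∈ U.powerset | (#T : ℤ) = k ∧ (#(A ∩ T) : ℤ) = l} : ℤ) =
      C #A l * C (#U - #A) (k - l) := by
  by_cases hkl : 0 ≤ l ∧ 0 ≤ k - l
  · obtain ⟨l, rfl⟩ := Int.eq_ofNat_of_zero_le hkl.1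
    obtain ⟨m, hm⟩ := Int.eq_ofNat_of_zero_le hkl.2
    obtain rfl : k = (l + m : ℕ) := by omega
    have hUA : (#U : ℤ) - #A = #(U \ A) := by
      rw [card_sdiff_of_subset hA, Nat.cast_sub (card_le_card hA)]
    rw [hm, hUA, C_eq_choose (by omega) (by omega), C_eq_choose (by omega) (by omega)]
    simp only [Int.toNat_natCast]
    exact_mod_cast card_powerset_filter_card_inter_eq_choose_mul_choose hA l m
  · have hempty : {T ∈ U.powerset | (#T : ℤ) = k ∧ (#(A ∩ T) : ℤ) = l} = ∅ := by
      refine filter_false_of_mem fun T _ ⟨hT, hAT⟩ ↦ hkl ?_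
      have := card_le_card (inter_subset_right : A ∩ T ⊆ T)
      omega
    have hC : C #A l * C (#U - #A) (k - l) = 0 := by
      rcases not_and_or.mp hkl with h | h
      · rw [C_of_neg _ (not_le.mp h), zero_mul]
      · rw [C_of_neg _ (not_le.mp h), mul_zero]
    rw [hempty, hC, card_empty, Nat.cast_zero]

lemma card_powerset_filter_and_superset {U β : Finset α} (hβ : β ⊆ U) (P : Finset α → Prop)
    [DecidablePred P] :
    #{T ∈ U.powerset | P T ∧ β ⊆ T} = #{T ∈ (U \ β).powerset | P (β ∪ T)} := by
  refine card_nbij' (· \ β) (β ∪ ·) ?_ ?_ ?_ ?_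
  · intro T hT
    simp only [coe_filter, mem_powerset, Set.mem_ofPred] at hT ⊢
    rw [union_sdiff_of_subset hT.2.2]
    exact ⟨sdiff_subset_sdiff hT.1 subset_rfl, hT.2.1⟩
  · intro T hT
    simp only [coe_filter, mem_powerset, Set.mem_ofPred] at hT ⊢
    exact ⟨union_subset hβ (hT.1.trans sdiff_subset), hT.2, subset_union_left⟩
  · intro T hT
    simp only [coe_filter, mem_powerset, Set.mem_ofPred] at hT
    exact union_sdiff_of_subset hT.2.2
  · intro T hT
    simp only [coe_filter, mem_powerset, Set.mem_ofPred] at hT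
    exact union_sdiff_cancel_left (disjoint_of_subset_right hT.1 disjoint_sdiff)

lemma card_inter_union_of_disjoint {A β T : Finset α} (h : Disjoint β T) :
    #(A ∩ (β ∪ T)) = #(A ∩ β) + #((A \ β) ∩ T) := by
  rw [inter_union_distrib_left, ← card_union_of_disjoint]
  · congr 1
    grind
  · exact disjoint_of_subset_left inter_subset_right
      (disjoint_of_subset_right inter_subset_right h)

end

theorem statement3_general (n kr kc ℓ : ℕ)
    (A β : Finset ℕ) (hA : A ⊆ Finset.Icc 1 n) (hAcard : A.card = kr)
    (hβ : β ⊆ Finset.Icc 1 n) :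
    (((Finset.Icc 1 n).powerset.filter fun T =>
        T.card = kc ∧ (A ∩ T).card = ℓ ∧ β ⊆ T).card : ℤ)
      = C ((kr : ℤ) - (A ∩ β).card) ((ℓ : ℤ) - (A ∩ β).card) *
        C ((n : ℤ) - β.card - kr + (A ∩ β).card)
          ((kc : ℤ) - β.card - ℓ + (A ∩ β).card) := by
  simp only [← and_assoc]
  rw [card_powerset_filter_and_superset hβ]
  have hsplit : ∀ T ∈ (Icc 1 n \ β).powerset,
      (#(β ∪ T) = kc ∧ #(A ∩ (β ∪ T)) = ℓ) ↔
        ((#T : ℤ) = kc - #β ∧ (#((A \ β) ∩ T) : ℤ) = ℓ - #(A ∩ β)) := by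
    intro T hT
    have hd : Disjoint β T := disjoint_of_subset_right (mem_powerset.mp hT) disjoint_sdiff
    rw [card_union_of_disjoint hd, card_inter_union_of_disjoint hd]
    omega
  have hAβ := card_sdiff_add_card_inter A β
  have hUβ : #(Icc 1 n \ β) + #β = n := by
    rw [card_sdiff_add_card_eq_card hβ, Nat.card_Icc, Nat.add_sub_cancel]
  rw [filter_congr hsplit,
    card_powerset_filter_card_inter_eq_C_mul_C (sdiff_subset_sdiff hA subset_rfl)]
  congr 2 <;> omega

theorem statement3 (n kr kc ℓ : ℕ) (h1 : ℓ ≤ kr) (h2 : kr ≤ kc) (h3 : kc ≤ n)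
    (A β : Finset ℕ) (hA : A ⊆ Finset.Icc 1 n) (hAcard : A.card = kr)
    (hβ : β ⊆ Finset.Icc 1 n) (hstd : IsStandard β) (hb : β.card ≤ kc) :
    (((Finset.Icc 1 n).powerset.filter fun T =>
        T.card = kc ∧ (A ∩ T).card = ℓ ∧ β ⊆ T).card : ℤ)
      = C ((kr : ℤ) - (A ∩ β).card) ((ℓ : ℤ) - (A ∩ β).card) *
        C ((n : ℤ) - β.card - kr + (A ∩ β).card)
          ((kc : ℤ) - β.card - ℓ + (A ∩ β).card) :=
  statement3_general n kr kc ℓ A β hA hAcard hβ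
end

section
/- Let 0 ≤ ℓ ≤ k_r ≤ k_c ≤ n be integers with n ≥ k_r + k_c. Let U be the integer matrix with rows indexed by the standard subsets α of {1,…,n} of size at most k_r and columns indexed by the standard subsets β of size at most k_c, with entries U(α,β) = f_{|α|}(|β|; n, k_r, k_c, ℓ) if α ⊆ β and U(α,β) = 0 otherwise. Then A_{n,k_r,k_c,ℓ} · P_{k_c} = P_{k_r} · U. -/
open scoped Classical

/-- The `k`-element subsets of `{1,…,n}`. -/
def ksubsets (n k : ℕ) : Finset (Finset ℕ) :=
  (Finset.Icc 1 n).powerset.filter fun A => A.card = k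

/-- The standard subsets of `{1,…,n}` of size at most `k`. -/
noncomputable def stdLe (n k : ℕ) : Finset (Finset ℕ) :=
  (Finset.Icc 1 n).powerset.filter fun β => IsStandard β ∧ β.card ≤ k

/-- The subset intersection matrix `A_{n,kr,kc,ℓ}`. -/
noncomputable def interMat (n kr kc ℓ : ℕ) :
    Matrix ↥(ksubsets n kr) ↥(ksubsets n kc) ℤ :=
  Matrix.of fun A B => if ((A : Finset ℕ) ∩ (B : Finset ℕ)).card = ℓ then 1 else 0

/-- The Bier matrix `P_k`, rows indexed by `k`-subsets, columns by standard `(≤ k)`-subsets. -/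
noncomputable def P (n k : ℕ) : Matrix ↥(ksubsets n k) ↥(stdLe n k) ℤ :=
  Matrix.of fun A β => if (β : Finset ℕ) ⊆ (A : Finset ℕ) then 1 else 0

/-- `f_i(j; n, kr, kc, ℓ)`. -/
noncomputable def f (n kr kc ℓ i j : ℕ) : ℤ :=
  ∑ v ∈ Finset.range (i + 1),
    (-1 : ℤ) ^ (i + v) * (i.choose v) *
      (C ((kr : ℤ) - v) ((ℓ : ℤ) - v) * C ((n : ℤ) - kr - j + v) ((kc : ℤ) - ℓ - j + v))

/-- The upper triangular matrix `U` with `(α,β)` entry `f_{|α|}(|β|)` when `α ⊆ β`. -/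
noncomputable def U (n kr kc ℓ : ℕ) : Matrix ↥(stdLe n kr) ↥(stdLe n kc) ℤ :=
  Matrix.of fun α β =>
    if (α : Finset ℕ) ⊆ (β : Finset ℕ) then
      f n kr kc ℓ (α : Finset ℕ).card (β : Finset ℕ).card
    else 0

/-!
Compare entries. The `(A, β)` entry of the left side counts the `k_c`-sets `B ⊇ β` with
`|A ∩ B| = ℓ`; writing `B = β ∪ X ∪ Y` with `X ⊆ A \ β` and `Y` disjoint from `A ∪ β` shows that
this count is `c_t(j)`, where `t = |A ∩ β|` and `j = |β|`. Subsets of standard sets are standard,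
so the right side is `∑_{γ ⊆ A ∩ β} f_{|γ|}(j) = ∑_s C(t, s) f_s(j)`, and this is again `c_t(j)`
by binomial inversion, since `f_i(j)` is the `i`-th inverse binomial transform of `v ↦ c_v(j)`.
-/

open Finset

lemma Finset.sort_getD_eq_nth (s : Finset ℕ) (i : ℕ) :
    (s.sort (· ≤ ·)).getD i 0 = Nat.nth (· ∈ s) i := by
  rw [Nat.nth_eq_getD_sort (p := (· ∈ s)) s.finite_toSet]
  simp

lemma Nat.nth_mem_le_nth_mem_of_subset {s t : Finset ℕ} (h : s ⊆ t) {i : ℕ} (hi : i < #s) :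
    Nat.nth (· ∈ t) i ≤ Nat.nth (· ∈ s) i := by
  have hcount : Nat.count (· ∈ s) (Nat.nth (· ∈ s) i + 1) = i + 1 :=
    Nat.count_nth_succ fun _ => by simpa using hi
  refine Nat.le_of_lt_succ (Nat.nth_lt_of_lt_count ?_)
  calc i < Nat.count (· ∈ s) (Nat.nth (· ∈ s) i + 1) := by omega
    _ ≤ _ := Nat.count_mono_left fun _ _ hk => h hk

lemma IsStandard.mono {s t : Finset ℕ} (ht : IsStandard t) (h : s ⊆ t) : IsStandard s := by
  intro i hi
  have hti := ht i (hi.trans_le (card_le_card h))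
  rw [Finset.sort_getD_eq_nth] at hti ⊢
  exact hti.trans (Nat.nth_mem_le_nth_mem_of_subset h hi)

lemma C_natCast (m : ℕ) (y : ℤ) : C m y = if 0 ≤ y then (m.choose y.toNat : ℤ) else 0 := by
  unfold C
  split_ifs with h h' h' <;> try simp
  · omega
  · exact_mod_cast (Nat.choose_eq_zero_of_lt (by omega)).symm

lemma card_filter_powerset_card_eq_C {α : Type*} (s : Finset α) (y : ℤ) :
    (#{X ∈ s.powerset | (#X : ℤ) = y} : ℤ) = C #s y := by
  rw [C_natCast]
  split_ifs with hy
  · lift y to ℕ using hy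
    simp [← powersetCard_eq_filter]
  · simp only [Nat.cast_eq_zero, card_eq_zero, filter_eq_empty_iff]
    intro X _
    omega

lemma sum_range_choose_mul_neg_one_pow_mul_choose (t v : ℕ) :
    ∑ s ∈ range (t + 1), (t.choose s : ℤ) * ((-1) ^ (s + v) * s.choose v) =
      if v = t then 1 else 0 := by
  rcases lt_or_ge t v with htv | hvt
  · rw [if_neg htv.ne']
    refine sum_eq_zero fun s hs => ?_
    rw [Nat.choose_eq_zero_of_lt (n := s) (k := v) (by simp at hs; omega)]
    simp
  obtain ⟨m, rfl⟩ := Nat.exists_eq_add_of_le hvt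
  have hterm : ∀ u ∈ range (m + 1),
      ((v + m).choose (v + u) : ℤ) * ((-1) ^ (v + u + v) * (v + u).choose v)
        = (v + m).choose v * ((-1) ^ u * m.choose u) := by
    intro u _
    have := Nat.choose_mul (n := v + m) (k := v + u) (s := v) (by omega)
    simp only [Nat.add_sub_cancel_left] at this
    rw [show v + u + v = 2 * v + u by ring, pow_add, pow_mul, neg_one_sq]
    have hcast : ((v + m).choose (v + u) : ℤ) * (v + u).choose v =
        (v + m).choose v * m.choose u := by
      exact_mod_cast this
    simp only [one_pow, one_mul]
    linear_combination (-1 : ℤ) ^ u * hcast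
  rw [show v + m + 1 = v + (m + 1) by ring, sum_range_add, sum_eq_zero, zero_add,
    sum_congr rfl hterm, ← mul_sum, Int.alternating_sum_range_choose]
  · rcases m with _ | m <;> simp
  · intro s hs
    rw [Nat.choose_eq_zero_of_lt (n := s) (k := v) (by simpa using hs)]
    simp

lemma sum_range_choose_mul_alternating_sum (t : ℕ) (g : ℕ → ℤ) :
    ∑ s ∈ range (t + 1), (t.choose s : ℤ) *
      ∑ v ∈ range (s + 1), (-1) ^ (s + v) * s.choose v * g v = g t := by
  have hextend : ∀ s ∈ range (t + 1), ∑ v ∈ range (s + 1), (-1 : ℤ) ^ (s + v) * s.choose v * g v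
      = ∑ v ∈ range (t + 1), (-1 : ℤ) ^ (s + v) * s.choose v * g v := by
    intro s hs
    refine sum_subset (range_subset_range.2 (by simpa using hs)) fun v _ hv => ?_
    rw [Nat.choose_eq_zero_of_lt (n := s) (k := v) (by simpa using hv)]
    simp
  calc _ = ∑ v ∈ range (t + 1), (∑ s ∈ range (t + 1),
          (t.choose s : ℤ) * ((-1) ^ (s + v) * s.choose v)) * g v := by
        rw [sum_congr rfl fun s hs => by rw [hextend s hs, mul_sum], sum_comm]
        refine sum_congr rfl fun v _ => ?_
        rw [sum_mul]
        exact sum_congr rfl fun s _ => by ring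
    _ = g t := by simp [sum_range_choose_mul_neg_one_pow_mul_choose]

lemma sum_powerset_f_card {α : Type*} (T : Finset α) (n kr kc ℓ j : ℕ) :
    ∑ γ ∈ T.powerset, f n kr kc ℓ #γ j =
      C ((kr : ℤ) - #T) ((ℓ : ℤ) - #T) * C ((n : ℤ) - kr - j + #T) ((kc : ℤ) - ℓ - j + #T) := by
  rw [sum_powerset_apply_card fun m => f n kr kc ℓ m j]
  simp only [nsmul_eq_mul, f]
  exact sum_range_choose_mul_alternating_sum #T
    fun v => C ((kr : ℤ) - v) ((ℓ : ℤ) - v) * C ((n : ℤ) - kr - j + v) ((kc : ℤ) - ℓ - j + v)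

section Supersets

variable {α : Type*} [DecidableEq α] {S A B β X Y : Finset α}

lemma card_union_union_of_subset_sdiff (hX : X ⊆ A \ β) (hY : Y ⊆ S \ (A ∪ β)) :
    #(β ∪ X ∪ Y) = #β + #X + #Y ∧ #(A ∩ (β ∪ X ∪ Y)) = #(A ∩ β) + #X := by
  have hβX : Disjoint β X := disjoint_left.2 fun x hx hx' => (mem_sdiff.1 (hX hx')).2 hx
  have hβXY : Disjoint (β ∪ X) Y := disjoint_left.2 fun x hx hx' => by
    have := mem_sdiff.1 (hY hx')
    rcases mem_union.1 hx with h | h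
    · exact this.2 (mem_union_right _ h)
    · exact this.2 (mem_union_left _ (mem_sdiff.1 (hX h)).1)
  have hinter : A ∩ (β ∪ X ∪ Y) = (A ∩ β) ∪ X := by
    ext x
    have := @hX x
    have := @hY x
    simp only [mem_inter, mem_union, mem_sdiff] at *
    tauto
  refine ⟨by rw [card_union_of_disjoint hβXY, card_union_of_disjoint hβX], ?_⟩
  rw [hinter, card_union_of_disjoint (hβX.mono_left inter_subset_right)]

lemma union_inter_sdiff_union_sdiff_eq (hβB : β ⊆ B) :
    β ∪ (A ∩ B) \ β ∪ B \ (A ∪ β) = B := by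
  ext x
  have := @hβB x
  simp only [mem_union, mem_sdiff, mem_inter]
  tauto

lemma card_filter_supersets_inter_eq (hA : A ⊆ S) (hβ : β ⊆ S) (k ℓ : ℕ) :
    (#{B ∈ S.powerset | #B = k ∧ #(A ∩ B) = ℓ ∧ β ⊆ B} : ℤ) =
      C ((#A : ℤ) - #(A ∩ β)) ((ℓ : ℤ) - #(A ∩ β)) *
        C ((#S : ℤ) - #A - #β + #(A ∩ β)) ((k : ℤ) - ℓ - #β + #(A ∩ β)) := by
  have hcard_sdiff : (#(A \ β) : ℤ) = #A - #(A ∩ β) := by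
    have := card_sdiff_add_card_inter A β
    omega
  have hcard_compl : (#(S \ (A ∪ β)) : ℤ) = #S - #A - #β + #(A ∩ β) := by
    have := card_sdiff_add_card_inter S (A ∪ β)
    have := card_union_add_card_inter A β
    rw [inter_eq_right.2 (union_subset hA hβ)] at *
    omega
  rw [← hcard_sdiff, ← hcard_compl, ← card_filter_powerset_card_eq_C,
    ← card_filter_powerset_card_eq_C, ← Nat.cast_mul, ← card_product, ← filter_product]
  congr 1
  refine card_nbij' (fun B => ((A ∩ B) \ β, B \ (A ∪ β))) (fun p => β ∪ p.1 ∪ p.2)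
    ?_ ?_ ?_ ?_ <;> simp only [coe_filter, mem_powerset, mem_product]
  · rintro B ⟨hBS, rfl, rfl, hβB⟩
    have hX : (A ∩ B) \ β ⊆ A \ β := sdiff_subset_sdiff inter_subset_left subset_rfl
    have hY : B \ (A ∪ β) ⊆ S \ (A ∪ β) := sdiff_subset_sdiff hBS subset_rfl
    obtain ⟨hcard, hcard_inter⟩ := card_union_union_of_subset_sdiff hX hY
    rw [union_inter_sdiff_union_sdiff_eq hβB] at hcard hcard_inter
    refine ⟨⟨hX, hY⟩, ?_, ?_⟩ <;> push_cast [hcard, hcard_inter] <;> ring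
  · rintro ⟨X, Y⟩ ⟨⟨hX, hY⟩, hXcard, hYcard⟩
    dsimp only at hX hY hXcard hYcard ⊢
    obtain ⟨hcard, hcard_inter⟩ := card_union_union_of_subset_sdiff hX hY
    refine ⟨union_subset (union_subset hβ ?_) ?_, ?_, ?_, subset_union_left.trans subset_union_left⟩
    · exact hX.trans (sdiff_subset.trans hA)
    · exact hY.trans sdiff_subset
    · omega
    · omega
  · exact fun B ⟨_, _, _, hβB⟩ => union_inter_sdiff_union_sdiff_eq hβB
  · rintro ⟨X, Y⟩ ⟨⟨hX, hY⟩, -⟩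
    refine Prod.ext ?_ ?_ <;> ext x <;> have := @hX x <;> have := @hY x <;>
      simp only [mem_union, mem_sdiff, mem_inter] at * <;> tauto

end Supersets

lemma mem_ksubsets {n k : ℕ} {A : Finset ℕ} : A ∈ ksubsets n k ↔ A ⊆ Icc 1 n ∧ #A = k := by
  simp [ksubsets]

lemma mem_stdLe {n k : ℕ} {β : Finset ℕ} :
    β ∈ stdLe n k ↔ β ⊆ Icc 1 n ∧ IsStandard β ∧ #β ≤ k := by
  simp [stdLe]

lemma interMat_mul_P_apply (n kr kc ℓ : ℕ) (A : ksubsets n kr) (β : stdLe n kc) :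
    (interMat n kr kc ℓ * P n kc) A β =
      #{B ∈ (Icc 1 n).powerset | #B = kc ∧ #(A.1 ∩ B) = ℓ ∧ β.1 ⊆ B} := by
  simp only [Matrix.mul_apply, interMat, P, Matrix.of_apply, ite_zero_mul_ite_zero, mul_one]
  rw [sum_coe_sort (ksubsets n kc) fun B => if #(A.1 ∩ B) = ℓ ∧ β.1 ⊆ B then (1 : ℤ) else 0,
    ksubsets, ← filter_filter, natCast_card_filter]

lemma P_mul_U_apply (n kr kc ℓ : ℕ) (A : ksubsets n kr) (β : stdLe n kc) :
    (P n kr * U n kr kc ℓ) A β = ∑ γ ∈ (A.1 ∩ β.1).powerset, f n kr kc ℓ #γ #β.1 := by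
  simp only [Matrix.mul_apply, U, P, Matrix.of_apply, ite_zero_mul_ite_zero, one_mul,
    ← subset_inter_iff]
  rw [sum_coe_sort (stdLe n kr) fun γ => if γ ⊆ A.1 ∩ β.1 then f n kr kc ℓ #γ #β.1 else 0,
    ← sum_filter]
  congr 1
  ext γ
  obtain ⟨hA, hAcard⟩ := mem_ksubsets.1 A.2
  obtain ⟨-, hβ, -⟩ := mem_stdLe.1 β.2
  simp only [mem_filter, mem_stdLe, mem_powerset, subset_inter_iff]
  refine ⟨fun h => h.2, fun ⟨hγA, hγβ⟩ => ⟨⟨hγA.trans hA, hβ.mono hγβ, ?_⟩, hγA, hγβ⟩⟩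
  exact hAcard ▸ card_le_card hγA

theorem statement4_general (n kr kc ℓ : ℕ) :
    interMat n kr kc ℓ * P n kc = P n kr * U n kr kc ℓ := by
  ext ⟨A, hA⟩ ⟨β, hβ⟩
  rw [mem_ksubsets] at hA
  rw [mem_stdLe] at hβ
  rw [interMat_mul_P_apply, P_mul_U_apply, card_filter_supersets_inter_eq hA.1 hβ.1,
    sum_powerset_f_card, hA.2, Nat.card_Icc, Nat.add_sub_cancel]

theorem statement4 (n kr kc ℓ : ℕ) (h1 : ℓ ≤ kr) (h2 : kr ≤ kc) (h3 : kc ≤ n)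
    (h4 : kr + kc ≤ n) :
    interMat n kr kc ℓ * P n kc = P n kr * U n kr kc ℓ :=
  statement4_general n kr kc ℓ
end

section
/- Let 0 ≤ s ≤ i ≤ j ≤ n be integers. Then the product of standard inclusion matrices satisfies W_{s,i} · W_{i,j} = C(j−s, i−s) · W_{s,j}. -/
/-!
Passing to a subset can only raise the `k`-th smallest element, so every subset of a standard set
is standard. Hence the standard `i`-sets `γ` with `α ⊆ γ ⊆ β` are exactly the `i`-subsets of `β`
containing `α`, and these correspond to the `(i - |α|)`-subsets of `β \ α`.
-/

open scoped Classical

/-- The standard `k`-element subsets of `{1,…,n}`. -/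
noncomputable def stdSets (n k : ℕ) : Finset (Finset ℕ) :=
  (Finset.Icc 1 n).powerset.filter fun β => IsStandard β ∧ β.card = k

/-- The standard inclusion matrix `W_{i,j}` of standard `i`-subsets vs standard `j`-subsets. -/
noncomputable def W (n i j : ℕ) : Matrix ↥(stdSets n i) ↥(stdSets n j) ℤ :=
  Matrix.of fun α β => if (α : Finset ℕ) ⊆ (β : Finset ℕ) then 1 else 0

open Finset

namespace Finset

section LinearOrder

variable {α : Type*} [LinearOrder α]

theorem sort_getD_eq_orderEmbOfFin (s : Finset α) (d : α) {k : ℕ} (hk : k < #s) :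
    (s.sort (· ≤ ·)).getD k d = s.orderEmbOfFin rfl ⟨k, hk⟩ := by
  rw [orderEmbOfFin_apply, List.getD_eq_getElem _ _ (by simpa using hk)]
  rfl

theorem card_filter_le_orderEmbOfFin (s : Finset α) {m : ℕ} (h : #s = m) (k : Fin m) :
    #(s.filter (· ≤ s.orderEmbOfFin h k)) = k + 1 := calc
  _ = #((univ.map (s.orderEmbOfFin h).toEmbedding).filter (· ≤ s.orderEmbOfFin h k)) := by
    rw [map_orderEmbOfFin_univ]
  _ = #(univ.filter (· ≤ k)) := by
    rw [filter_map, card_map]; congr 1; ext; simp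
  _ = k + 1 := by rw [filter_ge_eq_Iic, Fin.card_Iic]

theorem card_filter_lt_orderEmbOfFin (s : Finset α) {m : ℕ} (h : #s = m) (k : Fin m) :
    #(s.filter (· < s.orderEmbOfFin h k)) = k := calc
  _ = #((univ.map (s.orderEmbOfFin h).toEmbedding).filter (· < s.orderEmbOfFin h k)) := by
    rw [map_orderEmbOfFin_univ]
  _ = #(univ.filter (· < k)) := by
    rw [filter_map, card_map]; congr 1; ext; simp
  _ = k := by rw [filter_gt_eq_Iio, Fin.card_Iio]

theorem orderEmbOfFin_le_of_lt_card_filter_le {s : Finset α} {m : ℕ} (h : #s = m) (k : Fin m)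
    {x : α} (hk : k < #(s.filter (· ≤ x))) : s.orderEmbOfFin h k ≤ x := by
  by_contra! hx
  have hsub : s.filter (· ≤ x) ⊆ s.filter (· < s.orderEmbOfFin h k) := fun y => by
    simp only [mem_filter]
    exact And.imp_right fun hy => hy.trans_lt hx
  have := card_le_card hsub
  rw [card_filter_lt_orderEmbOfFin] at this
  omega

theorem orderEmbOfFin_le_of_subset {s t : Finset α} (hst : s ⊆ t) (k : Fin #s) :
    t.orderEmbOfFin rfl (k.castLE (card_le_card hst)) ≤ s.orderEmbOfFin rfl k := by
  apply orderEmbOfFin_le_of_lt_card_filter_le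
  have := card_le_card (filter_subset_filter (· ≤ s.orderEmbOfFin rfl k) hst)
  rw [card_filter_le_orderEmbOfFin] at this
  simp only [Fin.val_castLE]
  omega

end LinearOrder

theorem card_filter_superset_powersetCard {α : Type*} [DecidableEq α] {s t : Finset α}
    (hst : s ⊆ t) (k : ℕ) :
    #((t.powersetCard (#s + k)).filter (s ⊆ ·)) = (#t - #s).choose k := by
  rw [← card_sdiff_of_subset hst, ← card_powersetCard]
  refine card_nbij' (· \ s) (· ∪ s) ?_ ?_ ?_ ?_ <;> intro u hu <;>
    simp only [mem_coe, mem_filter, mem_powersetCard] at hu ⊢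
  · obtain ⟨⟨hut, hu⟩, hsu⟩ := hu
    exact ⟨sdiff_subset_sdiff hut le_rfl, by rw [card_sdiff_of_subset hsu, hu]; omega⟩
  · obtain ⟨hut, hu⟩ := hu
    have hdisj : Disjoint u s := disjoint_of_subset_left hut sdiff_disjoint
    refine ⟨⟨union_subset (hut.trans sdiff_subset) hst, ?_⟩, subset_union_right⟩
    rw [card_union_of_disjoint hdisj, hu, add_comm]
  · exact sdiff_union_of_subset hu.2
  · exact union_sdiff_cancel_right (disjoint_of_subset_left hu.1 sdiff_disjoint)

end Finset

theorem isStandard_iff_orderEmbOfFin {β : Finset ℕ} :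
    IsStandard β ↔ ∀ k : Fin #β, 2 * (k + 1) ≤ β.orderEmbOfFin rfl k := by
  rw [IsStandard, Fin.forall_iff]
  exact forall_congr' fun k => forall_congr' fun hk => by rw [sort_getD_eq_orderEmbOfFin]

theorem IsStandard.subset {γ β : Finset ℕ} (hβ : IsStandard β) (hγβ : γ ⊆ β) : IsStandard γ := by
  rw [isStandard_iff_orderEmbOfFin] at hβ ⊢
  exact fun k => (hβ _).trans (orderEmbOfFin_le_of_subset hγβ k)

theorem mem_stdSets {n k : ℕ} {β : Finset ℕ} :
    β ∈ stdSets n k ↔ β ⊆ Icc 1 n ∧ IsStandard β ∧ #β = k := by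
  rw [stdSets, mem_filter, mem_powerset]

theorem filter_subset_stdSets {n i j : ℕ} {β : Finset ℕ} (hβ : β ∈ stdSets n j) :
    (stdSets n i).filter (· ⊆ β) = β.powersetCard i := by
  obtain ⟨hβn, hβstd, -⟩ := mem_stdSets.1 hβ
  ext γ
  simp only [mem_filter, mem_stdSets, mem_powersetCard]
  exact ⟨fun ⟨⟨_, _, hγ⟩, hγβ⟩ => ⟨hγβ, hγ⟩,
    fun ⟨hγβ, hγ⟩ => ⟨⟨hγβ.trans hβn, hβstd.subset hγβ, hγ⟩, hγβ⟩⟩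

theorem W_mul_W_apply (n s i j : ℕ) (α : stdSets n s) (β : stdSets n j) :
    (W n s i * W n i j) α β = #((stdSets n i).filter fun γ => (α : Finset ℕ) ⊆ γ ∧ γ ⊆ β) := by
  simp only [Matrix.mul_apply, W, Matrix.of_apply, boole_mul, ← ite_and]
  rw [sum_coe_sort (stdSets n i) fun γ => if (α : Finset ℕ) ⊆ γ ∧ γ ⊆ β then (1 : ℤ) else 0,
    sum_boole]

theorem statement5_general (n s i j : ℕ) (h1 : s ≤ i) :
    W n s i * W n i j = ((j - s).choose (i - s) : ℤ) • W n s j := by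
  obtain ⟨k, rfl⟩ := Nat.exists_eq_add_of_le h1
  ext ⟨α, hα⟩ ⟨β, hβ⟩
  rw [W_mul_W_apply, Matrix.smul_apply, W, Matrix.of_apply]
  split_ifs with hαβ
  · obtain ⟨-, -, rfl⟩ := mem_stdSets.1 hα
    obtain ⟨-, -, rfl⟩ := mem_stdSets.1 hβ
    rw [← filter_filter, filter_comm, filter_subset_stdSets hβ,
      card_filter_superset_powersetCard hαβ, Nat.add_sub_cancel_left, smul_eq_mul, mul_one]
  · rw [filter_eq_empty_iff.2 fun γ _ h => hαβ (h.1.trans h.2), card_empty, Nat.cast_zero,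
      smul_zero]

theorem statement5 (n s i j : ℕ) (h1 : s ≤ i) (h2 : i ≤ j) (h3 : j ≤ n) :
    W n s i * W n i j = ((j - s).choose (i - s) : ℤ) • W n s j :=
  statement5_general n s i j h1
end
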